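/- arXiv:1506.02596 — 5 statements merged into one kernel-verified Lean document; each statement's English description precedes it below -/
import Mathlib

section
/- Let E be a real normed vector space. Let P₁, …, Pₙ be finitely many finite subsets of E such that each Pⱼ is contained in the open ball of radius εⱼ > 0 about some point cⱼ of E, and such that for every pair of indices i, k there is a sequence Pᵢ = P_{j₁}, P_{j₂}, …, P_{j_m} = P_k in which the consecutive sets P_{j_r} and P_{j_{r+1}} have at least one point in common. Then the union P₁ ∪ ⋯ ∪ Pₙ is contained in an open ball of radius ε₁ + ⋯ + εₙ about some point of E. -/
/-!
Link the sets one at a time, always adding a set that meets the union already covered;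
the chain hypothesis guarantees such a set exists until all are used. If the covered
union lies in a ball of radius `R` and the new set in a ball of radius `ε` meeting it, the
centres are less than `R + ε` apart, and the point dividing the segment between them in the
ratio `ε : R` is the centre of a ball of radius `R + ε` containing both balls.
-/

open Metric

section Chains

variable {α : Type*}

theorem exists_rel_mem_notMem_of_chain {R : α → α → Prop} {s : Set α} {m : ℕ}
    {j : Fin (m + 1) → α} (hj : ∀ r : Fin m, R (j r.castSucc) (j r.succ))
    (h0 : j 0 ∈ s) (hlast : j (Fin.last m) ∉ s) : ∃ a ∈ s, ∃ b ∉ s, R a b := by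
  by_contra! h
  exact hlast <| Fin.induction h0
    (fun r hr => not_not.mp fun hb => h _ hr _ hb (hj r)) (Fin.last m)

theorem Finset.univ_induction_of_chain [Fintype α] [DecidableEq α] [Nonempty α]
    {R : α → α → Prop}
    (hchain : ∀ i k : α, ∃ (m : ℕ) (j : Fin (m + 1) → α),
      j 0 = i ∧ j (Fin.last m) = k ∧ ∀ r : Fin m, R (j r.castSucc) (j r.succ))
    {Q : Finset α → Prop} (singleton : ∀ i, Q {i})
    (insert : ∀ s a b, Q s → a ∈ s → b ∉ s → R a b → Q (insert b s)) :
    Q Finset.univ := by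
  have grow : ∀ k, 1 ≤ k → k ≤ Fintype.card α → ∃ s : Finset α, s.card = k ∧ Q s := by
    refine Nat.le_induction ?_ fun k hk ih hlt => ?_
    · exact fun _ => ⟨{Classical.arbitrary α}, Finset.card_singleton _, singleton _⟩
    obtain ⟨s, rfl, hs⟩ := ih (Nat.le_of_succ_le hlt)
    obtain ⟨i, hi⟩ := Finset.card_pos.mp hk
    obtain ⟨l, -, hl⟩ := Finset.exists_mem_notMem_of_card_lt_card
      (t := Finset.univ) (Nat.lt_of_succ_le hlt)
    obtain ⟨m, j, rfl, rfl, hj⟩ := hchain i l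
    obtain ⟨a, ha, b, hb, hab⟩ :=
      exists_rel_mem_notMem_of_chain (s := (s : Set α)) hj hi hl
    exact ⟨_, Finset.card_insert_of_notMem hb, insert s a b hs ha hb hab⟩
  obtain ⟨s, hcard, hs⟩ := grow _ Fintype.card_pos le_rfl
  rwa [Finset.eq_univ_of_card s hcard] at hs

end Chains

section Balls

variable {E : Type*} [NormedAddCommGroup E] [NormedSpace ℝ E]

theorem exists_ball_union_ball_subset_ball_add {x y : E} {r s : ℝ} (hr : 0 ≤ r) (hs : 0 ≤ s)
    (hxy : dist x y < r + s) : ∃ z, ball x r ∪ ball y s ⊆ ball z (r + s) := by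
  have hrs : 0 < r + s := lt_of_le_of_lt dist_nonneg hxy
  set z := AffineMap.lineMap x y (s / (r + s))
  have hzx : dist x z ≤ s := by
    rw [dist_comm, dist_lineMap_left, Real.norm_of_nonneg (by positivity), div_mul_comm]
    exact mul_le_of_le_one_left hs ((div_le_one hrs).mpr hxy.le)
  have hzy : dist y z ≤ r := by
    rw [dist_comm, dist_lineMap_right, show 1 - s / (r + s) = r / (r + s) by field_simp; ring,
      Real.norm_of_nonneg (by positivity), div_mul_comm]
    exact mul_le_of_le_one_left hr ((div_le_one hrs).mpr hxy.le)
  exact ⟨z, Set.union_subset (ball_subset_ball' (by linarith))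
    (ball_subset_ball' (by linarith))⟩

theorem exists_union_subset_ball_add {A B : Set E} {x y : E} {r s : ℝ} (hA : A ⊆ ball x r)
    (hB : B ⊆ ball y s) (hAB : (A ∩ B).Nonempty) : ∃ z, A ∪ B ⊆ ball z (r + s) := by
  obtain ⟨p, hpA, hpB⟩ := hAB
  have hpx : dist p x < r := hA hpA
  have hpy : dist p y < s := hB hpB
  have hxy : dist x y < r + s := by
    linarith [dist_triangle x p y, dist_comm x p]
  obtain ⟨z, hz⟩ := exists_ball_union_ball_subset_ball_add
    (dist_nonneg.trans hpx.le) (dist_nonneg.trans hpy.le) hxy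
  exact ⟨z, (Set.union_subset_union hA hB).trans hz⟩

end Balls

theorem chain_of_balls_general {E : Type*} [NormedAddCommGroup E] [NormedSpace ℝ E]
    (n : ℕ) (hn : 0 < n) (P : Fin n → Set E)
    (ε : Fin n → ℝ) (c : Fin n → E)
    (hP : ∀ i, P i ⊆ Metric.ball (c i) (ε i))
    (hchain : ∀ i k : Fin n, ∃ (m : ℕ) (j : Fin (m + 1) → Fin n),
      j 0 = i ∧ j (Fin.last m) = k ∧
      ∀ r : Fin m, (P (j r.castSucc) ∩ P (j r.succ)).Nonempty) :
    ∃ y : E, (⋃ i, P i) ⊆ Metric.ball y (∑ i, ε i) := by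
  have : Nonempty (Fin n) := ⟨⟨0, hn⟩⟩
  have hcover := Finset.univ_induction_of_chain (R := fun i k => (P i ∩ P k).Nonempty) hchain
    (Q := fun s => ∃ y, ⋃ i ∈ s, P i ⊆ ball y (∑ i ∈ s, ε i))
    (fun i => ⟨c i, by simpa using hP i⟩)
    (fun s a b ⟨y, hy⟩ ha hb hab => by
      obtain ⟨z, hz⟩ := exists_union_subset_ball_add (hP b) hy
        (hab.mono fun p hp => ⟨hp.2, Set.mem_biUnion ha hp.1⟩)
      exact ⟨z, by rwa [Finset.set_biUnion_insert, Finset.sum_insert hb]⟩)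
  simpa using hcover

/-- **Chains of overlapping balls.** Let `P 0, …, P (n-1)` be finitely many finite
subsets of a real normed vector space `E`, each `P i` contained in the open ball of
radius `ε i > 0` about `c i`, and suppose any two of the sets are connected by a chain
of the sets in which consecutive sets share a point. Then the union of all the `P i`
is contained in an open ball of radius `∑ i, ε i` about some point of `E`. -/
theorem chain_of_balls {E : Type*} [NormedAddCommGroup E] [NormedSpace ℝ E]
    (n : ℕ) (hn : 0 < n) (P : Fin n → Set E) (hfin : ∀ i, (P i).Finite)
    (ε : Fin n → ℝ) (hε : ∀ i, 0 < ε i) (c : Fin n → E)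
    (hP : ∀ i, P i ⊆ Metric.ball (c i) (ε i))
    (hchain : ∀ i k : Fin n, ∃ (m : ℕ) (j : Fin (m + 1) → Fin n),
      j 0 = i ∧ j (Fin.last m) = k ∧
      ∀ r : Fin m, (P (j r.castSucc) ∩ P (j r.succ)).Nonempty) :
    ∃ y : E, (⋃ i, P i) ⊆ Metric.ball y (∑ i, ε i) :=
  chain_of_balls_general n hn P ε c hP hchain
end

section
/- Let E be a real normed vector space, let ε₁, ε₂ > 0, let c₁, c₂ ∈ E, and let P₁ and P₂ be subsets of E with P₁ contained in the open ball of radius ε₁ about c₁ and P₂ contained in the open ball of radius ε₂ about c₂. Suppose there exists a point x ∈ P₁ ∩ P₂. Then there exists a point y on the segment joining c₁ and c₂ such that ‖c₁ − y‖ < ε₂ and ‖c₂ − y‖ < ε₁; consequently P₁ ∪ P₂ is contained in the open ball of radius ε₁ + ε₂ about y. -/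
open AffineMap Metric

theorem exists_mem_segment_dist_lt_lt {E : Type*} [SeminormedAddCommGroup E] [NormedSpace ℝ E]
    {x z : E} {δ ε : ℝ} (hδ : 0 < δ) (hε : 0 < ε) (h : dist x z < δ + ε) :
    ∃ y ∈ segment ℝ x z, dist x y < δ ∧ dist z y < ε := by
  have hδε : 0 < δ + ε := add_pos hδ hε
  set t := δ / (δ + ε)
  have ht : 0 < t := div_pos hδ hδε
  have hs_eq : 1 - t = ε / (δ + ε) := by
    rw [eq_div_iff hδε.ne', sub_mul, div_mul_cancel₀ δ hδε.ne']; ring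
  have hs : 0 < 1 - t := hs_eq ▸ div_pos hε hδε
  refine ⟨lineMap x z t, lineMap_mem_segment ℝ x z ⟨ht.le, by linarith⟩, ?_, ?_⟩
  · calc dist x (lineMap x z t) = t * dist x z := by
          rw [dist_left_lineMap, Real.norm_of_nonneg ht.le]
      _ < t * (δ + ε) := mul_lt_mul_of_pos_left h ht
      _ = δ := div_mul_cancel₀ δ hδε.ne'
  · calc dist z (lineMap x z t) = (1 - t) * dist x z := by
          rw [dist_right_lineMap, Real.norm_of_nonneg hs.le]
      _ < (1 - t) * (δ + ε) := mul_lt_mul_of_pos_left h hs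
      _ = ε := by rw [hs_eq, div_mul_cancel₀ ε hδε.ne']

/-- **Two overlapping balls.** If `P₁` lies in the open ball of radius `ε₁` about `c₁`,
`P₂` lies in the open ball of radius `ε₂` about `c₂`, and `P₁` and `P₂` share a point `x`,
then there is a point `y` on the segment joining `c₁` and `c₂` with `‖c₁ - y‖ < ε₂` and
`‖c₂ - y‖ < ε₁`, and consequently `P₁ ∪ P₂` lies in the open ball of radius `ε₁ + ε₂`
about `y`. -/
theorem two_overlapping_balls {E : Type*} [NormedAddCommGroup E] [NormedSpace ℝ E]
    (ε₁ ε₂ : ℝ) (hε₁ : 0 < ε₁) (hε₂ : 0 < ε₂) (c₁ c₂ : E) (P₁ P₂ : Set E)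
    (hP₁ : P₁ ⊆ Metric.ball c₁ ε₁) (hP₂ : P₂ ⊆ Metric.ball c₂ ε₂)
    (x : E) (hx₁ : x ∈ P₁) (hx₂ : x ∈ P₂) :
    ∃ y ∈ segment ℝ c₁ c₂, ‖c₁ - y‖ < ε₂ ∧ ‖c₂ - y‖ < ε₁ ∧
      P₁ ∪ P₂ ⊆ Metric.ball y (ε₁ + ε₂) := by
  have hc : dist c₁ c₂ < ε₂ + ε₁ := by
    have h₁ : dist c₁ x < ε₁ := mem_ball'.mp (hP₁ hx₁)
    have h₂ : dist x c₂ < ε₂ := mem_ball.mp (hP₂ hx₂)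
    linarith [dist_triangle c₁ x c₂]
  obtain ⟨y, hy, h₁, h₂⟩ := exists_mem_segment_dist_lt_lt hε₂ hε₁ hc
  refine ⟨y, hy, by rwa [← dist_eq_norm], by rwa [← dist_eq_norm], Set.union_subset ?_ ?_⟩
  · exact hP₁.trans (ball_subset_ball' (by linarith))
  · exact hP₂.trans (ball_subset_ball' (by linarith))
end

section
/- Let T be a finite tree with at least two vertices, equipped with a nonnegative edge-length function ℓ, and suppose (T, ℓ) is short-branched. Then for every pair of distinct vertices u, v of T, the deviation D(u,v) is greater than or equal to zero. -/
open scoped Classical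
open Finset

noncomputable section

variable {V : Type*}

/-- A leaf of a graph is a vertex of degree one. -/
def IsLeafVertex [Fintype V] (G : SimpleGraph V) (v : V) : Prop := G.degree v = 1

/-- The finset of leaves of a graph. -/
def leafSet [Fintype V] (G : SimpleGraph V) : Finset V :=
  Finset.univ.filter (fun v => IsLeafVertex G v)

/-- The length of a pseudometric graph: the sum of the lengths of its edges. -/
def totalLength [Fintype V] (G : SimpleGraph V) (ℓ : Sym2 V → ℝ) : ℝ :=
  ∑ e ∈ G.edgeFinset, ℓ e

/-- The leaf length of a tree: one less than its number of leaves. -/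
def leafLength [Fintype V] (G : SimpleGraph V) : ℝ := ((leafSet G).card : ℝ) - 1

/-- `sideComp G u v` is the vertex set of the connected component containing `v` of the
graph obtained from `G` by deleting the vertex `u`: the set of vertices reachable from
`v` by a walk avoiding `u`. -/
def sideComp (G : SimpleGraph V) (u v : V) : Set V :=
  {x | ∃ p : G.Walk v x, u ∉ p.support}

/-- The length of the subspace `T(u,v)`: the sum of the lengths of all edges having at
least one endpoint in `sideComp G u v`. -/
def sideLength [Fintype V] (G : SimpleGraph V) (ℓ : Sym2 V → ℝ) (u v : V) : ℝ :=
  ∑ e ∈ G.edgeFinset.filter (fun e => ∃ x ∈ e, x ∈ sideComp G u v), ℓ e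

/-- The leaf length of the subspace `T(u,v)`: the number of leaves of `G` lying in
`sideComp G u v`. -/
def sideLeafCount [Fintype V] (G : SimpleGraph V) (u v : V) : ℕ :=
  ((leafSet G).filter (fun x => x ∈ sideComp G u v)).card

/-- The deviation `D(u,v)`: the leaf length of `T(u,v)` minus the length of `T(u,v)`. -/
def deviation [Fintype V] (G : SimpleGraph V) (ℓ : Sym2 V → ℝ) (u v : V) : ℝ :=
  (sideLeafCount G u v : ℝ) - sideLength G ℓ u v

/-- The length of the branch at `(u,w)`: `ℓ {u,w}` plus the sum of the lengths of all
edges with both endpoints in `sideComp G u w`. -/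
def branchLength [Fintype V] (G : SimpleGraph V) (ℓ : Sym2 V → ℝ) (u w : V) : ℝ :=
  ℓ s(u, w) + ∑ e ∈ G.edgeFinset.filter (fun e => ∀ x ∈ e, x ∈ sideComp G u w), ℓ e

/-- A pseudometric tree is short-branched if its length equals its leaf length and the
length of every branch (at a vertex of degree at least 3) is at most its leaf length. -/
def ShortBranched [Fintype V] (G : SimpleGraph V) (ℓ : Sym2 V → ℝ) : Prop :=
  totalLength G ℓ = leafLength G ∧
  ∀ u w : V, 3 ≤ G.degree u → G.Adj u w →
    branchLength G ℓ u w ≤ (sideLeafCount G u w : ℝ)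

/-- The product of the factors `D(vᵢ, vᵢ₊₁)/(1 − D(vᵢ₊₁, vᵢ))` along a list of vertices;
applied to the support of the unique path from `v` to `w` this gives the barycentric
coordinate `a(v,w)`. -/
def pathProd [Fintype V] (G : SimpleGraph V) (ℓ : Sym2 V → ℝ) : List V → ℝ
  | a :: b :: rest =>
      (deviation G ℓ a b / (1 - deviation G ℓ b a)) * pathProd G ℓ (b :: rest)
  | _ => 1

/-!
`D(u, v)` depends only on the component of `T - u` containing `v`, so we may take `v` adjacent
to `u`. Walk from `u` away from `v` through vertices of degree two: each such step from `u` to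
its other neighbour `w` changes the deviation by `D(u, v) = D(w, u) + ℓ(uw) ≥ D(w, u)`. The walk
ends at a leaf, whose side holds every other leaf and every edge, so the deviation there is
`(#leaves - 1) - length T = 0`, or at a vertex of degree at least three, where `T(u, v)` is a
branch and the short-branched condition gives `D ≥ 0`.
-/

namespace SimpleGraph

variable {G : SimpleGraph V} {u v w x y : V}

theorem mem_sideComp_self (h : u ≠ v) : v ∈ sideComp G u v :=
  ⟨Walk.nil, by simpa using h⟩

theorem notMem_sideComp : u ∉ sideComp G u v := fun ⟨p, hp⟩ => hp p.end_mem_support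

theorem mem_sideComp_of_adj (hx : x ∈ sideComp G u v) (hxy : G.Adj x y) (hy : y ≠ u) :
    y ∈ sideComp G u v := by
  obtain ⟨p, hp⟩ := hx
  refine ⟨p.concat hxy, ?_⟩
  simp only [Walk.support_concat, List.mem_append, List.mem_singleton]
  exact fun h => h.elim hp fun h => hy h.symm

theorem mem_sideComp_of_mem_support {p : G.Walk v w} (hp : u ∉ p.support) (hx : x ∈ p.support) :
    x ∈ sideComp G u v :=
  ⟨p.takeUntil x hx, fun h => hp (p.support_takeUntil_subset_support hx h)⟩

theorem sideComp_eq_of_mem (hx : x ∈ sideComp G u v) : sideComp G u x = sideComp G u v := by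
  obtain ⟨p, hp⟩ := hx
  ext y
  constructor
  · rintro ⟨q, hq⟩
    exact ⟨p.append q, by simp only [Walk.mem_support_append_iff]; tauto⟩
  · rintro ⟨q, hq⟩
    exact ⟨p.reverse.append q, by
      simp only [Walk.mem_support_append_iff, Walk.support_reverse, List.mem_reverse]; tauto⟩

theorem Walk.exists_adj_mem_support_mem_sideComp (p : G.Walk u x) (hx : x ≠ u) :
    ∃ z, G.Adj u z ∧ z ∈ p.support ∧ x ∈ sideComp G u z := by
  obtain ⟨z, huz, q, hq⟩ := p.bypass.exists_eq_cons_of_ne hx.symm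
  have hpath := p.bypass_isPath
  rw [hq, Walk.cons_isPath_iff] at hpath
  refine ⟨z, huz, p.support_bypass_subset_support ?_, q, hpath.2⟩
  simp [hq]

/-- `s(u, x)` is a bridge, so the walk `u → v ⇝ x`, whose tail avoids `u`, uses it as its
first edge. -/
theorem IsAcyclic.eq_of_adj_of_mem_sideComp (hG : G.IsAcyclic) (huv : G.Adj u v)
    (hua : G.Adj u x) (hx : x ∈ sideComp G u v) : x = v := by
  obtain ⟨q, hq⟩ := hx
  have hmem := isBridge_iff_forall_walk_mem_edges.1 (isAcyclic_iff_forall_adj_isBridge.1 hG hua)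
    (Walk.cons huv q)
  rw [Walk.edges_cons, List.mem_cons] at hmem
  rcases hmem with h | h
  · exact Sym2.congr_right.1 h
  · exact absurd (q.fst_mem_support_of_mem_edges h) hq

theorem sideComp_eq_compl_singleton (hG : G.Connected)
    (hN : ∀ z, G.Adj u z → z = v) : sideComp G u v = {u}ᶜ := by
  ext x
  refine ⟨fun hx (hxu : x = u) => notMem_sideComp (hxu ▸ hx), fun hxu => ?_⟩
  obtain ⟨z, huz, -, hx⟩ := (hG.preconnected u x).some.exists_adj_mem_support_mem_sideComp hxu
  rwa [← hN z huz]

theorem sideComp_eq_insert (hG : G.IsAcyclic) (hvw : v ≠ w)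
    (hN : ∀ z, G.Adj u z ↔ z = v ∨ z = w) : sideComp G w u = insert u (sideComp G u v) := by
  have huv : G.Adj u v := (hN v).2 (Or.inl rfl)
  have huw : G.Adj u w := (hN w).2 (Or.inr rfl)
  ext x
  constructor
  · rintro ⟨p, hp⟩
    by_cases hxu : x = u
    · exact Or.inl hxu
    obtain ⟨z, huz, hzp, hx⟩ := p.exists_adj_mem_support_mem_sideComp hxu
    obtain rfl : z = v := ((hN z).1 huz).resolve_right fun h => hp (h ▸ hzp)
    exact Or.inr hx
  · rintro (rfl | ⟨q, hq⟩)
    · exact mem_sideComp_self huw.ne'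
    · have hwq : w ∉ q.support := fun h =>
        hvw (hG.eq_of_adj_of_mem_sideComp huv huw (mem_sideComp_of_mem_support hq h)).symm
      refine ⟨Walk.cons huv q, ?_⟩
      simpa [huw.ne'] using hwq

section Lengths

variable [Fintype V] {ℓ : Sym2 V → ℝ}

def edgesMeeting (G : SimpleGraph V) (S : Set V) : Finset (Sym2 V) :=
  G.edgeFinset.filter fun e => ∃ x ∈ e, x ∈ S

def edgesWithin (G : SimpleGraph V) (S : Set V) : Finset (Sym2 V) :=
  G.edgeFinset.filter fun e => ∀ x ∈ e, x ∈ S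

theorem sideLength_eq_sum : sideLength G ℓ u v = ∑ e ∈ edgesMeeting G (sideComp G u v), ℓ e :=
  rfl

theorem branchLength_eq_sum :
    branchLength G ℓ u v = ℓ s(u, v) + ∑ e ∈ edgesWithin G (sideComp G u v), ℓ e :=
  rfl

theorem edgesWithin_insert_sideComp :
    edgesWithin G (insert u (sideComp G u v)) = edgesMeeting G (sideComp G u v) := by
  ext e
  induction e using Sym2.ind with | _ a b => ?_
  simp only [edgesWithin, edgesMeeting, mem_filter, mem_edgeFinset, mem_edgeSet,
    Sym2.mem_iff, forall_eq_or_imp, forall_eq, exists_eq_or_imp, exists_eq_left, Set.mem_insert_iff]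
  constructor
  · rintro ⟨hab, ha | ha, hb | hb⟩
    · exact absurd (ha.trans hb.symm) hab.ne
    all_goals tauto
  · rintro ⟨hab, ha | hb⟩
    · exact ⟨hab, .inr ha, (eq_or_ne b u).imp_right (mem_sideComp_of_adj ha hab)⟩
    · exact ⟨hab, (eq_or_ne a u).imp_right (mem_sideComp_of_adj hb hab.symm), .inr hb⟩

/-- An edge leaving the side ends at `u`, and by acyclicity it then starts at `v`. -/
theorem IsAcyclic.edgesMeeting_sideComp (hG : G.IsAcyclic) (huv : G.Adj u v) :
    edgesMeeting G (sideComp G u v) = insert s(u, v) (edgesWithin G (sideComp G u v)) := by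
  ext e
  induction e using Sym2.ind with | _ a b => ?_
  simp only [edgesWithin, edgesMeeting, mem_insert, mem_filter, mem_edgeFinset, mem_edgeSet,
    Sym2.mem_iff, forall_eq_or_imp, forall_eq, exists_eq_or_imp, exists_eq_left]
  constructor
  · rintro ⟨hab, ha | hb⟩
    · rcases eq_or_ne b u with rfl | hbu
      · rw [hG.eq_of_adj_of_mem_sideComp huv hab.symm ha, Sym2.eq_swap]
        exact .inl rfl
      · exact .inr ⟨hab, ha, mem_sideComp_of_adj ha hab hbu⟩
    · rcases eq_or_ne a u with rfl | hau
      · rw [hG.eq_of_adj_of_mem_sideComp huv hab hb]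
        exact .inl rfl
      · exact .inr ⟨hab, mem_sideComp_of_adj hb hab.symm hau, hb⟩
  · rintro (h | ⟨hab, ha, -⟩)
    · rcases Sym2.eq_iff.1 h with ⟨rfl, rfl⟩ | ⟨rfl, rfl⟩
      · exact ⟨huv, .inr (mem_sideComp_self huv.ne)⟩
      · exact ⟨huv.symm, .inl (mem_sideComp_self huv.ne)⟩
    · exact ⟨hab, .inl ha⟩

theorem IsAcyclic.sideLength_eq_branchLength (hG : G.IsAcyclic) (huv : G.Adj u v) :
    sideLength G ℓ u v = branchLength G ℓ u v := by
  rw [sideLength_eq_sum, branchLength_eq_sum, hG.edgesMeeting_sideComp huv, sum_insert]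
  simp only [edgesWithin, mem_filter, not_and]
  exact fun _ h => notMem_sideComp (h u (Sym2.mem_mk_left u v))

theorem deviation_eq_of_mem_sideComp (hx : x ∈ sideComp G u v) :
    deviation G ℓ u x = deviation G ℓ u v := by
  simp only [deviation, sideLeafCount, sideLength, sideComp_eq_of_mem hx]

theorem deviation_eq_zero_of_degree_eq_one (hG : G.Connected)
    (hlen : totalLength G ℓ = leafLength G) (huv : G.Adj u v) (hd : G.degree u = 1) :
    deviation G ℓ u v = 0 := by
  have hN : ∀ z, G.Adj u z → z = v := fun z huz =>
    card_le_one.1 (by rw [card_neighborFinset_eq_degree, hd]) z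
      ((mem_neighborFinset G u z).2 huz) v ((mem_neighborFinset G u v).2 huv)
  have hC := sideComp_eq_compl_singleton hG hN
  have hu : u ∈ leafSet G := mem_filter.2 ⟨mem_univ u, hd⟩
  have hleaves : (leafSet G).filter (· ∈ sideComp G u v) = (leafSet G).erase u := by
    ext x
    simp [hC, and_comm]
  have hedges : edgesMeeting G (sideComp G u v) = G.edgeFinset := by
    refine filter_true_of_mem fun e he => ?_
    induction e using Sym2.ind with | _ a b => ?_
    have hab : a ≠ b := (mem_edgeSet G).1 (mem_edgeFinset.1 he) |>.ne
    rw [hC]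
    by_cases ha : a = u
    · exact ⟨b, Sym2.mem_mk_right a b, by simpa [← ha] using hab.symm⟩
    · exact ⟨a, Sym2.mem_mk_left a b, ha⟩
  rw [deviation, sideLeafCount, sideLength_eq_sum, hleaves, hedges, card_erase_of_mem hu,
    Nat.cast_sub (card_pos.2 ⟨u, hu⟩)]
  rw [totalLength, leafLength] at hlen
  push_cast
  linarith

theorem IsAcyclic.deviation_eq_add_of_sideComp_eq_insert (hG : G.IsAcyclic) (hwu : G.Adj w u)
    (hu : u ∉ leafSet G) (hC : sideComp G w u = insert u (sideComp G u v)) :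
    deviation G ℓ u v = deviation G ℓ w u + ℓ s(w, u) := by
  have hleaves : sideLeafCount G w u = sideLeafCount G u v := by
    rw [sideLeafCount, sideLeafCount, hC]
    congr 1
    ext x
    simp only [mem_filter, Set.mem_insert_iff, and_congr_right_iff]
    exact fun hx => or_iff_right (by rintro rfl; exact hu hx)
  have hlength : sideLength G ℓ w u = ℓ s(w, u) + sideLength G ℓ u v := by
    rw [hG.sideLength_eq_branchLength hwu, branchLength_eq_sum, hC, edgesWithin_insert_sideComp,
      sideLength_eq_sum]
  rw [deviation, deviation, hleaves, hlength]
  ring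

theorem exists_adj_iff_of_degree_eq_two (huv : G.Adj u v) (hd : G.degree u = 2) :
    ∃ w, v ≠ w ∧ ∀ z, G.Adj u z ↔ z = v ∨ z = w := by
  have hv : v ∈ G.neighborFinset u := (mem_neighborFinset G u v).2 huv
  obtain ⟨w, hw⟩ := card_eq_one.1 (by
    rw [card_erase_of_mem hv, card_neighborFinset_eq_degree, hd] :
      ((G.neighborFinset u).erase v).card = 1)
  have hN : G.neighborFinset u = {v, w} := by rw [← hw, insert_erase hv]
  refine ⟨w, fun hvw => ?_, fun z => by simp [← mem_neighborFinset, hN]⟩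
  simpa [hvw] using hw.ge (mem_singleton_self w)

theorem IsTree.deviation_nonneg_of_adj (hT : G.IsTree) (hℓ : ∀ e ∈ G.edgeSet, 0 ≤ ℓ e)
    (hsb : ShortBranched G ℓ) {u v : V} (huv : G.Adj u v) : 0 ≤ deviation G ℓ u v := by
  have hpos : 0 < G.degree u := G.degree_pos_iff_exists_adj u |>.2 ⟨v, huv⟩
  obtain hd | hd | hd : G.degree u = 1 ∨ G.degree u = 2 ∨ 3 ≤ G.degree u := by omega
  · exact (deviation_eq_zero_of_degree_eq_one hT.connected hsb.1 huv hd).ge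
  · obtain ⟨w, hvw, hN⟩ := exists_adj_iff_of_degree_eq_two huv hd
    have huw : G.Adj u w := (hN w).2 (Or.inr rfl)
    have hu : u ∉ leafSet G := fun h => by
      rw [leafSet, mem_filter, IsLeafVertex, hd] at h
      exact absurd h.2 (by decide)
    have hC := sideComp_eq_insert hT.isAcyclic hvw hN
    have := IsTree.deviation_nonneg_of_adj hT hℓ hsb huw.symm
    rw [hT.isAcyclic.deviation_eq_add_of_sideComp_eq_insert huw.symm hu hC]
    linarith [hℓ s(w, u) huw.symm]
  · rw [deviation, hT.isAcyclic.sideLength_eq_branchLength huv]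
    linarith [hsb.2 u v hd huv]
termination_by (sideComp G u v)ᶜ.ncard
decreasing_by
  rw [hC]
  exact Set.ncard_lt_ncard (compl_lt_compl_iff_lt.2 (Set.ssubset_insert notMem_sideComp))

end Lengths

end SimpleGraph

theorem deviation_nonneg_general [Fintype V] (G : SimpleGraph V)
    (ℓ : Sym2 V → ℝ) (hT : G.IsTree)
    (hℓ : ∀ e ∈ G.edgeSet, 0 ≤ ℓ e) (hsb : ShortBranched G ℓ)
    (u v : V) (huv : u ≠ v) :
    0 ≤ deviation G ℓ u v := by
  obtain ⟨z, huz, -, hv⟩ :=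
    (hT.connected.preconnected u v).some.exists_adj_mem_support_mem_sideComp huv.symm
  rw [SimpleGraph.deviation_eq_of_mem_sideComp hv]
  exact hT.deviation_nonneg_of_adj hℓ hsb huz

/-- **Deviations are nonnegative** (Lemma A.1 of the paper): in a short-branched tree,
`D(u,v) ≥ 0` for every pair of distinct vertices `u`, `v`. -/
theorem deviation_nonneg [Fintype V] [DecidableEq V] (G : SimpleGraph V)
    (ℓ : Sym2 V → ℝ) (hT : G.IsTree) (hV : 1 < Fintype.card V)
    (hℓ : ∀ e ∈ G.edgeSet, 0 ≤ ℓ e) (hsb : ShortBranched G ℓ)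
    (u v : V) (huv : u ≠ v) :
    0 ≤ deviation G ℓ u v :=
  deviation_nonneg_general G ℓ hT hℓ hsb u v huv
end
end

section
/- Let T be a finite tree with at least two vertices, equipped with a nonnegative edge-length function ℓ, and suppose (T, ℓ) is short-branched. Let u be a vertex of T, and for each connected component C of the graph obtained from T by deleting u choose a vertex v_C in C. Then the sum over all such components C of the deviations D(u, v_C) equals 0 if u is a leaf of T, and equals 1 otherwise. -/
open scoped Classical
open Finset

noncomputable section

variable {V : Type*}

lemma notMem_sideComp_self (G : SimpleGraph V) (u r : V) : u ∉ sideComp G u r := by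
  rintro ⟨p, hp⟩
  exact hp p.end_mem_support

lemma sideComp_adj {G : SimpleGraph V} {u r a b : V} (ha : a ∈ sideComp G u r)
    (hab : G.Adj a b) (hb : b ≠ u) : b ∈ sideComp G u r := by
  obtain ⟨p, hp⟩ := ha
  refine ⟨p.concat hab, ?_⟩
  rw [SimpleGraph.Walk.support_concat]
  simp only [List.concat_eq_append, List.mem_append, List.mem_singleton]
  rintro (h | h)
  · exact hp h
  · exact hb h.symm

lemma aux_sum_partition {α : Type*} (S : Finset α) (R : Finset V) (t : V → Finset α)
    (f : α → ℝ) (hsub : ∀ r ∈ R, t r ⊆ S)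
    (h : ∀ x ∈ S, ∃! r, r ∈ R ∧ x ∈ t r) :
    ∑ r ∈ R, ∑ x ∈ t r, f x = ∑ x ∈ S, f x := by
  classical
  rw [← Finset.sum_biUnion]
  · congr 1
    apply Finset.Subset.antisymm
    · intro x hx
      rw [Finset.mem_biUnion] at hx
      obtain ⟨r, hr, hx⟩ := hx
      exact hsub r hr hx
    · intro x hx
      obtain ⟨r, ⟨hr, hP⟩, _⟩ := h x hx
      exact Finset.mem_biUnion.mpr ⟨r, hr, hP⟩
  · intro r hr r' hr' hne
    simp only [Function.onFun, Finset.disjoint_left]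
    rintro x hP hP'
    obtain ⟨r₀, _, huniq⟩ := h x (hsub r hr hP)
    exact hne (by rw [huniq r ⟨hr, hP⟩, huniq r' ⟨hr', hP'⟩])

set_option maxHeartbeats 1000000 in
/-- **Sum of deviations at a vertex** (Lemma A.2 of the paper): in a short-branched tree,
for a vertex `u` and a set `R` consisting of one representative from each connected
component of the graph obtained by deleting `u`, the sum of the deviations `D(u, r)` over
`r ∈ R` equals `0` if `u` is a leaf and `1` otherwise. -/
theorem sum_deviation_at_vertex [Fintype V] [DecidableEq V] (G : SimpleGraph V)
    (ℓ : Sym2 V → ℝ) (hT : G.IsTree) (hV : 1 < Fintype.card V)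
    (hℓ : ∀ e ∈ G.edgeSet, 0 ≤ ℓ e) (hsb : ShortBranched G ℓ)
    (u : V) (R : Finset V) (hRu : u ∉ R)
    (hR : ∀ x : V, x ≠ u → ∃! r, r ∈ R ∧ x ∈ sideComp G u r) :
    ∑ r ∈ R, deviation G ℓ u r = if IsLeafVertex G u then 0 else 1 := by
  classical
  -- sum of the edge parts is the total length
  have hedge : ∀ e ∈ G.edgeFinset, ∃! r, r ∈ R ∧ ∃ x ∈ e, x ∈ sideComp G u r := by
    intro e he
    induction e using Sym2.ind with
    | _ a b =>
      have hab : G.Adj a b := by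
        rw [SimpleGraph.mem_edgeFinset, SimpleGraph.mem_edgeSet] at he
        exact he
      set w : V := if a = u then b else a with hw
      have hwne : w ≠ u := by
        by_cases hau : a = u
        · simp only [hw, hau, if_true]
          exact fun h => hab.ne (hau.trans h.symm)
        · simpa [hw, hau] using hau
      have hwmem : w ∈ s(a, b) := by
        by_cases hau : a = u <;> simp [hw, hau]
      have claim : ∀ r, (∃ x ∈ s(a, b), x ∈ sideComp G u r) ↔ w ∈ sideComp G u r := by
        intro r
        constructor
        · rintro ⟨x, hx, hxr⟩
          have hxu : x ≠ u := fun h => notMem_sideComp_self G u r (h ▸ hxr)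
          rw [Sym2.mem_iff] at hx
          by_cases hau : a = u
          · rcases hx with rfl | rfl
            · exact (hxu hau).elim
            · simpa [hw, hau] using hxr
          · simp only [hw, hau, if_false]
            rcases hx with rfl | rfl
            · exact hxr
            · exact sideComp_adj hxr hab.symm hau
        · intro hwr
          exact ⟨w, hwmem, hwr⟩
      obtain ⟨r, ⟨hr, hwr⟩, huniq⟩ := hR w hwne
      exact ⟨r, ⟨hr, (claim r).mpr hwr⟩,
        fun r' ⟨hr', hP'⟩ => huniq r' ⟨hr', (claim r').mp hP'⟩⟩
  have hedges : ∑ r ∈ R, sideLength G ℓ u r = totalLength G ℓ := by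
    simp only [sideLength, totalLength]
    refine aux_sum_partition G.edgeFinset R _ ℓ
      (fun r _ => by intro x hx; simp only [Finset.mem_filter] at hx; exact hx.1) ?_
    intro e he
    obtain ⟨r, ⟨hr, hP⟩, huniq⟩ := hedge e he
    refine ⟨r, ⟨hr, ?_⟩, fun r' hr' => huniq r' ⟨hr'.1, ?_⟩⟩
    · simp only [Finset.mem_filter]; exact ⟨he, hP⟩
    · have := hr'.2; simp only [Finset.mem_filter] at this; exact this.2
  -- sum of the leaf parts is the number of leaves other than `u`
  have hfilt : ∀ r, (leafSet G).filter (fun x => x ∈ sideComp G u r) =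
      ((leafSet G).erase u).filter (fun x => x ∈ sideComp G u r) := by
    intro r
    ext x
    simp only [Finset.mem_filter, Finset.mem_erase]
    constructor
    · rintro ⟨hx, hxr⟩
      exact ⟨⟨fun h => notMem_sideComp_self G u r (h ▸ hxr), hx⟩, hxr⟩
    · rintro ⟨⟨_, hx⟩, hxr⟩
      exact ⟨hx, hxr⟩
  have hleaves : ∑ r ∈ R, (sideLeafCount G u r : ℝ) = (((leafSet G).erase u).card : ℝ) := by
    have e1 : ∀ r, (sideLeafCount G u r : ℝ) =
        ∑ x ∈ ((leafSet G).erase u).filter (fun x => x ∈ sideComp G u r), (1 : ℝ) := by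
      intro r
      rw [sideLeafCount, hfilt r, Finset.sum_const, nsmul_eq_mul, mul_one]
    rw [Finset.sum_congr rfl (fun r _ => e1 r)]
    have e2 : ∑ x ∈ (leafSet G).erase u, (1 : ℝ) = (((leafSet G).erase u).card : ℝ) := by
      rw [Finset.sum_const, nsmul_eq_mul, mul_one]
    rw [← e2]
    refine aux_sum_partition ((leafSet G).erase u) R _ (fun _ => (1 : ℝ))
      (fun r _ => by intro x hx; simp only [Finset.mem_filter] at hx; exact hx.1) ?_
    intro x hx
    obtain ⟨r, ⟨hr, hP⟩, huniq⟩ := hR x (Finset.mem_erase.mp hx).1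
    refine ⟨r, ⟨hr, ?_⟩, fun r' hr' => huniq r' ⟨hr'.1, ?_⟩⟩
    · simp only [Finset.mem_filter]; exact ⟨hx, hP⟩
    · have := hr'.2; simp only [Finset.mem_filter] at this; exact this.2
  have hsum : ∑ r ∈ R, deviation G ℓ u r
      = (((leafSet G).erase u).card : ℝ) - totalLength G ℓ := by
    simp only [deviation]
    rw [Finset.sum_sub_distrib, hleaves, hedges]
  rw [hsum, hsb.1, leafLength]
  have humem : u ∈ leafSet G ↔ IsLeafVertex G u := by simp [leafSet]
  by_cases hu : IsLeafVertex G u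
  · have hmem : u ∈ leafSet G := humem.mpr hu
    rw [Finset.card_erase_of_mem hmem, if_pos hu,
      Nat.cast_sub (Finset.one_le_card.mpr ⟨u, hmem⟩)]
    push_cast
    ring
  · rw [Finset.erase_eq_of_notMem (fun h => hu (humem.mp h)), if_neg hu]
    ring
end
end

section
/- Let T be a finite tree with at least two vertices, equipped with an edge-length function ℓ assigning a strictly positive real length to each edge, and suppose (T, ℓ) is short-branched. Let v be a leaf of T and let w be any leaf of T. Then the barycentric coordinate a(v,w) equals 1 if w = v and equals 0 otherwise. In particular, the straightening map sends each leaf of T to the corresponding vertex of the simplex spanned by the leaves of T. -/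
open scoped Classical
open Finset

noncomputable section

variable {V : Type*}

lemma leaf_unique_nbr [Fintype V] {G : SimpleGraph V} {v a b : V}
    (hv : IsLeafVertex G v) (ha : G.Adj v a) (hb : G.Adj v b) : a = b := by
  have hcard : (G.neighborFinset v).card = 1 := by
    rw [G.card_neighborFinset_eq_degree]; exact hv
  obtain ⟨c, hc⟩ := Finset.card_eq_one.mp hcard
  have ha' : a ∈ G.neighborFinset v := by simpa using ha
  have hb' : b ∈ G.neighborFinset v := by simpa using hb
  rw [hc, Finset.mem_singleton] at ha' hb'
  rw [ha', hb']

lemma sideComp_leaf [Fintype V] {G : SimpleGraph V} {v t : V}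
    (hT : G.IsTree) (hv : IsLeafVertex G v) (hadj : G.Adj v t) :
    sideComp G v t = {x | x ≠ v} := by
  ext x
  constructor
  · rintro ⟨p, hp⟩ rfl
    exact hp p.end_mem_support
  · intro hx
    have hr : G.Reachable v x := hT.isConnected.preconnected v x
    obtain ⟨q, hq⟩ : ∃ q : G.Walk v x, q.IsPath :=
      ⟨(hr.some.toPath : G.Path v x).1, (hr.some.toPath : G.Path v x).2⟩
    cases q with
    | nil => exact absurd rfl hx
    | cons h q' =>
      have hb : _ = t := leaf_unique_nbr hv h hadj
      subst hb
      rw [SimpleGraph.Walk.cons_isPath_iff] at hq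
      exact ⟨q', hq.2⟩

lemma deviation_leaf [Fintype V] {G : SimpleGraph V} (ℓ : Sym2 V → ℝ)
    {v t : V} (hT : G.IsTree) (hv : IsLeafVertex G v) (hadj : G.Adj v t)
    (hsb : ShortBranched G ℓ) : deviation G ℓ v t = 0 := by
  have hsc := sideComp_leaf hT hv hadj
  have hvmem : v ∈ leafSet G := by
    simp only [leafSet, Finset.mem_filter, Finset.mem_univ, true_and]; exact hv
  have h1 : sideLeafCount G v t = (leafSet G).card - 1 := by
    unfold sideLeafCount
    have he : (leafSet G).filter (fun x => x ∈ sideComp G v t) = (leafSet G).erase v := by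
      ext x
      simp only [Finset.mem_filter, Finset.mem_erase, hsc, Set.mem_setOf_eq, and_comm]
    rw [he, Finset.card_erase_of_mem hvmem]
  have h2 : sideLength G ℓ v t = totalLength G ℓ := by
    unfold sideLength totalLength
    have key : ∀ e ∈ G.edgeFinset, ∃ x ∈ e, x ∈ sideComp G v t := by
      intro e
      induction e using Sym2.ind with
      | _ a b =>
        intro he
        have hadj' : G.Adj a b := by
          rw [SimpleGraph.mem_edgeFinset, SimpleGraph.mem_edgeSet] at he
          exact he
        by_cases hav : a = v
        · refine ⟨b, Sym2.mem_mk_right a b, ?_⟩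
          rw [hsc]
          intro hbv
          exact (hadj'.ne) (hav.trans hbv.symm)
        · exact ⟨a, Sym2.mem_mk_left a b, by rw [hsc]; exact hav⟩
    exact Finset.sum_subset (Finset.filter_subset _ _)
      (fun e he hne => absurd (Finset.mem_filter.mpr ⟨he, key e he⟩) hne)
  have hc1 : 1 ≤ (leafSet G).card := Finset.card_pos.mpr ⟨v, hvmem⟩
  unfold deviation
  rw [h1, h2, hsb.1]
  unfold leafLength
  rw [Nat.cast_sub hc1, Nat.cast_one]
  ring

/-- **Straightening sends leaves to vertices of the simplex**: in a short-branched tree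
with strictly positive edge lengths, for a leaf `v` and any leaf `w`, the barycentric
coordinate `a(v,w)` (the product of the factors `D(vᵢ,vᵢ₊₁)/(1-D(vᵢ₊₁,vᵢ))` along the
unique path from `v` to `w`) equals `1` if `w = v` and `0` otherwise. -/
theorem barycentric_coordinate_of_leaf [Fintype V] [DecidableEq V] (G : SimpleGraph V)
    (ℓ : Sym2 V → ℝ) (hT : G.IsTree) (hV : 1 < Fintype.card V)
    (hℓ : ∀ e ∈ G.edgeSet, 0 < ℓ e) (hsb : ShortBranched G ℓ)
    (v w : V) (hv : IsLeafVertex G v) (hw : IsLeafVertex G w)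
    (p : G.Walk v w) (hp : p.IsPath) :
    pathProd G ℓ p.support = if w = v then 1 else 0 := by
  by_cases hwv : w = v
  · subst hwv
    rw [if_pos rfl]
    rw [SimpleGraph.Walk.isPath_iff_eq_nil] at hp
    subst hp
    simp [pathProd]
  · rw [if_neg hwv]
    cases p with
    | nil => exact absurd rfl hwv
    | cons h q =>
      rw [SimpleGraph.Walk.support_cons, SimpleGraph.Walk.support_eq_cons q]
      show (deviation G ℓ v _ / _) * _ = 0
      rw [deviation_leaf ℓ hT hv h hsb, zero_div, zero_mul]
end
end
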